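/- The persistence module G : {0,1,2,3,4}² → vec defined in the context is indecomposable; in fact, its endomorphism ring satisfies End(G) ≅ k. -/

import Mathlib

/-- A pointwise finite dimensional persistence module over a poset `P`, with coefficients in
the field `k`: a functor from `P` to finite dimensional `k`-vector spaces. -/
structure PersMod (k : Type) [Field k] (P : Type) [PartialOrder P] : Type 1 where
  carrier : P → Type
  [addCommGroup : ∀ x, AddCommGroup (carrier x)]
  [module : ∀ x, Module k (carrier x)]
  [fd : ∀ x, FiniteDimensional k (carrier x)]
  map : ∀ {x y : P}, x ≤ y → (carrier x →ₗ[k] carrier y)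
  map_id : ∀ x : P, map (le_refl x) = LinearMap.id
  map_comp : ∀ {x y z : P} (h₁ : x ≤ y) (h₂ : y ≤ z),
      map (h₁.trans h₂) = (map h₂).comp (map h₁)

attribute [instance] PersMod.addCommGroup PersMod.module PersMod.fd

namespace PersMod

section Core

variable {k : Type} [Field k] {P : Type} [PartialOrder P]

/-- A morphism of persistence modules (a natural transformation). -/
structure Hom (M N : PersMod k P) where
  app : ∀ x, M.carrier x →ₗ[k] N.carrier x
  natural : ∀ {x y : P} (h : x ≤ y), (app y).comp (M.map h) = (N.map h).comp (app x)

theorem Hom.ext' {M N : PersMod k P} {f g : Hom M N} (h : ∀ x, f.app x = g.app x) :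
    f = g := by
  cases f; cases g
  have : _ = _ := funext h
  subst this
  rfl

/-- Two persistence modules are isomorphic. -/
def Isom (M N : PersMod k P) : Prop :=
  ∃ (f : Hom M N) (g : Hom N M),
    (∀ x, (g.app x).comp (f.app x) = LinearMap.id) ∧
    (∀ x, (f.app x).comp (g.app x) = LinearMap.id)

/-- The zero persistence module(s). -/
def IsZeroMod (M : PersMod k P) : Prop := ∀ x, Subsingleton (M.carrier x)

/-- The direct sum of two persistence modules. -/
def dsum (M N : PersMod k P) : PersMod k P where
  carrier x := M.carrier x × N.carrier x
  map h := (M.map h).prodMap (N.map h)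
  map_id x := by
    refine LinearMap.ext fun v => ?_
    simp [M.map_id, N.map_id]
  map_comp h₁ h₂ := by
    refine LinearMap.ext fun v => ?_
    simp [M.map_comp h₁ h₂, N.map_comp h₁ h₂]

/-- A persistence module is indecomposable if it is nonzero and in any way of writing it as
a direct sum of two modules, one of the summands is zero. -/
def Indecomposable (M : PersMod k P) : Prop :=
  ¬ IsZeroMod M ∧ ∀ A B : PersMod k P, Isom M (dsum A B) → IsZeroMod A ∨ IsZeroMod B

end Core

section EndRing

variable {k : Type} [Field k] {P : Type} [PartialOrder P] {M : PersMod k P}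

instance : Add (Hom M M) :=
  ⟨fun f g => ⟨fun x => f.app x + g.app x, fun {x y} h => by
    simp [LinearMap.add_comp, LinearMap.comp_add, f.natural h, g.natural h]⟩⟩

instance : Zero (Hom M M) :=
  ⟨⟨fun _ => 0, fun {x y} h => by simp⟩⟩

instance : Neg (Hom M M) :=
  ⟨fun f => ⟨fun x => -f.app x, fun {x y} h => by
    simp [LinearMap.neg_comp, LinearMap.comp_neg, f.natural h]⟩⟩

instance : One (Hom M M) :=
  ⟨⟨fun _ => LinearMap.id, fun {x y} h => by simp⟩⟩

instance : Mul (Hom M M) :=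
  ⟨fun f g => ⟨fun x => (f.app x).comp (g.app x), fun {x y} h => by
    rw [LinearMap.comp_assoc, g.natural h, ← LinearMap.comp_assoc, f.natural h,
      LinearMap.comp_assoc]⟩⟩

/-- The endomorphism ring of a persistence module, with multiplication given by
composition. -/
instance endRing : Ring (Hom M M) where
  add_assoc f g h := Hom.ext' fun x => add_assoc _ _ _
  zero_add f := Hom.ext' fun x => zero_add _
  add_zero f := Hom.ext' fun x => add_zero _
  add_comm f g := Hom.ext' fun x => add_comm _ _
  neg_add_cancel f := Hom.ext' fun x => neg_add_cancel _
  mul_assoc f g h := Hom.ext' fun x => rfl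
  one_mul f := Hom.ext' fun x => rfl
  mul_one f := Hom.ext' fun x => rfl
  left_distrib f g h := Hom.ext' fun x => LinearMap.comp_add _ _ _
  right_distrib f g h := Hom.ext' fun x => LinearMap.add_comp _ _ _
  zero_mul f := Hom.ext' fun x => LinearMap.zero_comp _
  mul_zero f := Hom.ext' fun x => LinearMap.comp_zero _
  nsmul := nsmulRec
  zsmul := zsmulRec

end EndRing

section Subquotient

variable {k : Type} [Field k] {P : Type} [PartialOrder P]

/-- The persistence module with value `V p / W p` at `p`, for monotone families of
submodules `W ≤ V` of an ambient finite-dimensional vector space `E`; all structure maps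
are induced by the identity of `E`. -/
noncomputable def subquotMod {E : Type} [AddCommGroup E] [Module k E] [FiniteDimensional k E]
    (V W : P → Submodule k E) (hV : Monotone V) (hW : Monotone W)
    (hWV : ∀ p, W p ≤ V p) : PersMod k P where
  carrier p := ↥(V p) ⧸ ((W p).comap (V p).subtype)
  map {p q} h := Submodule.mapQ _ _ (Submodule.inclusion (hV h)) (by
    intro x hx
    simp only [Submodule.mem_comap] at hx ⊢
    exact hW h hx)
  map_id p := by
    refine LinearMap.ext fun v => ?_
    obtain ⟨w, rfl⟩ := Submodule.Quotient.mk_surjective _ v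
    rw [Submodule.mapQ_apply]
    have h1 : Submodule.inclusion (hV (le_refl p)) w = w := Subtype.ext rfl
    rw [h1]
    rfl
  map_comp {p q r} h₁ h₂ := by
    refine LinearMap.ext fun v => ?_
    obtain ⟨w, rfl⟩ := Submodule.Quotient.mk_surjective _ v
    simp only [LinearMap.coe_comp, Function.comp_apply, Submodule.mapQ_apply]
    congr 1

lemma iteSub_mono {E : Type} [AddCommGroup E] [Module k E] {c : P → Prop}
    (hc : ∀ {p q : P}, p ≤ q → c p → c q) (A : Submodule k E) :
    Monotone (fun p => @ite _ (c p) (Classical.propDecidable _) A (⊥ : Submodule k E)) := by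
  intro p q h
  dsimp only
  split_ifs with h1 h2
  · exact le_rfl
  · exact absurd (hc h h1) h2
  · exact bot_le
  · exact bot_le

end Subquotient

end PersMod

open PersMod

namespace PersModG

open PersMod

variable (k : Type) [Field k]

/-- The poset `{0,1,2,3,4}²` with the product order. -/
abbrev P55 := Fin 5 × Fin 5

/-- The family of "generated" subspaces of `k²` defining the module `G`:
the generator of `G(1,2)` sits as `(1,0)`, the generator of `G(2,1)` as `(0,1)`, the
generators of `G(0,3)` and `G(3,0)` as `(1,1)`, and from `(0,4)` and `(4,0)` onwards
everything is generated. -/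
noncomputable def GV (p : P55) : Submodule k (k × k) :=
  (@ite _ (((1 : Fin 5), (2 : Fin 5)) ≤ p) (Classical.propDecidable _)
      (Submodule.span k {((1 : k), (0 : k))}) ⊥)
  ⊔ (@ite _ (((2 : Fin 5), (1 : Fin 5)) ≤ p) (Classical.propDecidable _)
      (Submodule.span k {((0 : k), (1 : k))}) ⊥)
  ⊔ (@ite _ (((0 : Fin 5), (3 : Fin 5)) ≤ p ∨ ((3 : Fin 5), (0 : Fin 5)) ≤ p)
      (Classical.propDecidable _) (Submodule.span k {((1 : k), (1 : k))}) ⊥)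
  ⊔ (@ite _ (((0 : Fin 5), (4 : Fin 5)) ≤ p ∨ ((4 : Fin 5), (0 : Fin 5)) ≤ p)
      (Classical.propDecidable _) (⊤ : Submodule k (k × k)) ⊥)

/-- The family of "relation" subspaces of `k²` defining the module `G`: from `(0,4)` and
`(4,0)` onwards, the vector `(1,1)` is killed, which makes the structure maps
`G(0,3) → G(0,4)` and `G(3,0) → G(4,0)` vanish and realizes the maps
`k² → k` as `(1,-1)`. -/
noncomputable def GW (p : P55) : Submodule k (k × k) :=
  @ite _ (((0 : Fin 5), (4 : Fin 5)) ≤ p ∨ ((4 : Fin 5), (0 : Fin 5)) ≤ p)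
    (Classical.propDecidable _) (Submodule.span k {((1 : k), (1 : k))}) ⊥

lemma GV_mono : Monotone (GV k) := by
  intro p q h
  unfold GV
  refine sup_le_sup (sup_le_sup (sup_le_sup ?_ ?_) ?_) ?_
  · exact iteSub_mono (fun h hc => hc.trans h) _ h
  · exact iteSub_mono (fun h hc => hc.trans h) _ h
  · exact iteSub_mono (c := fun p => ((0 : Fin 5), (3 : Fin 5)) ≤ p ∨ ((3 : Fin 5), (0 : Fin 5)) ≤ p)
      (fun h' hc => Or.imp (fun h'' => h''.trans h') (fun h'' => h''.trans h') hc) _ h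
  · exact iteSub_mono (c := fun p => ((0 : Fin 5), (4 : Fin 5)) ≤ p ∨ ((4 : Fin 5), (0 : Fin 5)) ≤ p)
      (fun h' hc => Or.imp (fun h'' => h''.trans h') (fun h'' => h''.trans h') hc) _ h

lemma GW_mono : Monotone (GW k) :=
  iteSub_mono (c := fun p => ((0 : Fin 5), (4 : Fin 5)) ≤ p ∨ ((4 : Fin 5), (0 : Fin 5)) ≤ p)
    (fun h' hc => Or.imp (fun h'' => h''.trans h') (fun h'' => h''.trans h') hc) _

lemma GWV : ∀ p, GW k p ≤ GV k p := by
  intro p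
  unfold GW GV
  split_ifs
  all_goals first
    | exact bot_le
    | exact le_trans le_top le_sup_right

/-- The persistence module `G` on the grid `{0,1,2,3,4}²`. -/
noncomputable def Gmod : PersMod k P55 :=
  subquotMod (GV k) (GW k) (GV_mono k) (GW_mono k) (GWV k)

end PersModG

/-!
An endomorphism `f` of `G` acts by a scalar on each of the one-dimensional spaces `G(1,2)`,
`G(2,1)`, `G(0,3)`, `G(3,0)`, `G(0,4)`, `G(4,0)`, spanned by the classes of `(1,0)`, `(0,1)`,
`(1,1)`, `(1,1)`, `(1,0)`, `(1,0)`. Naturality carries these eigenvectors upwards. At `(3,3)`,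
where `G` is all of `k²`, they become `e₁`, `e₂` and `e₁ + e₂`, so the first four scalars agree;
at `(1,4)` and `(4,1)` the generators coming from `(1,2)` and `(0,4)`, resp. `(2,1)` and `(4,0)`,
land on the same nonzero vector up to sign, since `(1,1)` is killed there. The six classes generate
`G`, so `f` is a scalar: `End(G) ≅ k`, whose only idempotents are `0` and `1`.
-/
section Eigenvalues

open Module.End

variable {K V : Type*} [Field K] [AddCommGroup V] [Module K V] {g : Module.End K V}

lemma exists_mem_eigenspace_of_span_eq_top {z : V} (hz : K ∙ z = ⊤) :
    ∃ a, z ∈ eigenspace g a := by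
  obtain ⟨a, ha⟩ := Submodule.mem_span_singleton.1 (hz ▸ Submodule.mem_top : g z ∈ K ∙ z)
  exact ⟨a, mem_eigenspace_iff.2 ha.symm⟩

lemma eq_of_mem_eigenspace_of_ne_zero {z : V} (hz : z ≠ 0) {a b : K}
    (ha : z ∈ eigenspace g a) (hb : z ∈ eigenspace g b) : a = b :=
  smul_left_injective K hz ((mem_eigenspace_iff.1 ha).symm.trans (mem_eigenspace_iff.1 hb))

lemma eq_of_mem_eigenspace_add {u w : V} (hind : LinearIndependent K ![u, w]) {a b c : K}
    (hu : u ∈ eigenspace g a) (hw : w ∈ eigenspace g b) (huw : u + w ∈ eigenspace g c) :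
    a = c ∧ b = c := by
  rw [mem_eigenspace_iff] at hu hw huw
  rw [map_add, hu, hw, smul_add] at huw
  have h := LinearIndependent.pair_iff.1 hind (a - c) (b - c)
    (by rw [sub_smul, sub_smul, sub_add_sub_comm, huw, sub_self])
  exact ⟨sub_eq_zero.1 h.1, sub_eq_zero.1 h.2⟩

end Eigenvalues

namespace PersMod

variable {k : Type} [Field k] {P : Type} [PartialOrder P]

namespace Hom

variable {M N L : PersMod k P}

lemma app_map (f : Hom M N) {x y : P} (h : x ≤ y) (z : M.carrier x) :
    f.app y (M.map h z) = N.map h (f.app x z) :=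
  LinearMap.congr_fun (f.natural h) z

@[simp]
lemma zero_app (x : P) (z : M.carrier x) : (0 : Hom M M).app x z = 0 :=
  rfl

@[simp]
lemma one_app (x : P) (z : M.carrier x) : (1 : Hom M M).app x z = z :=
  rfl

def comp (f : Hom N L) (g : Hom M N) : Hom M L where
  app x := (f.app x).comp (g.app x)
  natural h := by
    rw [LinearMap.comp_assoc, g.natural h, ← LinearMap.comp_assoc, f.natural h,
      LinearMap.comp_assoc]

@[simp]
lemma comp_app (f : Hom N L) (g : Hom M N) (x : P) (z : M.carrier x) :
    (f.comp g).app x z = f.app x (g.app x z) :=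
  rfl

lemma map_mem_eigenspace (f : Hom M M) {a : k} {x y : P} (h : x ≤ y) {z : M.carrier x}
    (hz : z ∈ Module.End.eigenspace (f.app x) a) :
    M.map h z ∈ Module.End.eigenspace (f.app y) a := by
  rw [Module.End.mem_eigenspace_iff] at hz ⊢
  rw [app_map, hz, map_smul]

end Hom

variable {M : PersMod k P}

def scalarHom : k →+* Hom M M where
  toFun a := ⟨fun _ => a • LinearMap.id, fun _ => by ext; simp⟩
  map_one' := Hom.ext' fun _ => one_smul _ _
  map_mul' a b := Hom.ext' fun _ => LinearMap.ext fun z => mul_smul a b z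
  map_zero' := Hom.ext' fun _ => zero_smul _ _
  map_add' a b := Hom.ext' fun _ => add_smul _ _ _

lemma nontrivial_hom_of_not_isZeroMod (hM : ¬ IsZeroMod M) : Nontrivial (Hom M M) := by
  obtain ⟨x, hx⟩ := not_forall.1 hM
  have := not_subsingleton_iff_nontrivial.1 hx
  obtain ⟨z, hz⟩ := exists_ne (0 : M.carrier x)
  exact ⟨0, 1, fun h => hz (by simpa using congr_arg (fun f : Hom M M => f.app x z) h.symm)⟩

lemma scalarHom_injective (hM : ¬ IsZeroMod M) :
    Function.Injective (scalarHom : k →+* Hom M M) :=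
  have := nontrivial_hom_of_not_isZeroMod hM
  RingHom.injective _

def dsum.fstProj (A B : PersMod k P) : Hom (dsum A B) (dsum A B) where
  app _ := LinearMap.prodMap LinearMap.id 0
  natural h := LinearMap.ext fun _ => Prod.ext rfl (map_zero (B.map h)).symm

@[simp]
lemma dsum.fstProj_app (A B : PersMod k P) (x : P) (w : (dsum A B).carrier x) :
    (dsum.fstProj A B).app x w = (w.1, 0) :=
  rfl

theorem indecomposable_of_isIdempotentElem (hM : ¬ IsZeroMod M)
    (hidem : ∀ e : Hom M M, IsIdempotentElem e → e = 0 ∨ e = 1) : Indecomposable M := by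
  refine ⟨hM, fun A B ⟨F, G, _, hFG⟩ => ?_⟩
  have hFG' : ∀ x w, F.app x (G.app x w) = w := fun x => LinearMap.congr_fun (hFG x)
  set e : Hom M M := G.comp ((dsum.fstProj A B).comp F)
  have he : ∀ x w, e.app x (G.app x w) = G.app x (w.1, 0) := fun x w => by
    simp [e, hFG']
  have he_idem : IsIdempotentElem e :=
    Hom.ext' fun x => LinearMap.ext fun z => he x ((F.app x z).1, 0)
  rcases hidem e he_idem with h0 | h1
  · refine Or.inl fun x => subsingleton_of_forall_eq 0 fun a => ?_
    have hG : G.app x (a, 0) = 0 := by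
      have h := he x (a, 0)
      rw [h0, Hom.zero_app] at h
      exact h.symm
    have h := hFG' x (a, 0)
    rw [hG, map_zero] at h
    exact congrArg Prod.fst h.symm
  · refine Or.inr fun x => subsingleton_of_forall_eq 0 fun b => ?_
    have hG : G.app x (0, b) = 0 := by
      have h := he x (0, b)
      rw [h1, Hom.one_app] at h
      exact h.trans (map_zero _)
    have h := hFG' x (0, b)
    rw [hG, map_zero] at h
    exact congrArg Prod.snd h.symm

end PersMod

namespace PersModG

open Module.End

variable {k : Type} [Field k]

lemma e1_mem_GV {p : P55} (h : (1, 2) ≤ p) : ((1 : k), (0 : k)) ∈ GV k p := by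
  refine Submodule.mem_sup_left (Submodule.mem_sup_left (Submodule.mem_sup_left ?_))
  rw [if_pos h]
  exact Submodule.mem_span_singleton_self _

lemma e2_mem_GV {p : P55} (h : (2, 1) ≤ p) : ((0 : k), (1 : k)) ∈ GV k p := by
  refine Submodule.mem_sup_left (Submodule.mem_sup_left (Submodule.mem_sup_right ?_))
  rw [if_pos h]
  exact Submodule.mem_span_singleton_self _

lemma diag_mem_GV {p : P55} (h : (0, 3) ≤ p ∨ (3, 0) ≤ p) : ((1 : k), (1 : k)) ∈ GV k p := by
  refine Submodule.mem_sup_left (Submodule.mem_sup_right ?_)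
  rw [if_pos h]
  exact Submodule.mem_span_singleton_self _

lemma mem_GV_of_boundary {p : P55} (h : (0, 4) ≤ p ∨ (4, 0) ≤ p) (x : k × k) : x ∈ GV k p := by
  refine Submodule.mem_sup_right ?_
  rw [if_pos h]
  trivial

lemma span_e1_sup_span_diag : (k ∙ ((1 : k), (0 : k))) ⊔ (k ∙ ((1 : k), (1 : k))) = ⊤ := by
  refine eq_top_iff.2 fun x _ => Submodule.mem_sup.2 ?_
  refine ⟨(x.1 - x.2) • (1, 0), Submodule.smul_mem _ _ (Submodule.mem_span_singleton_self _),
    x.2 • (1, 1), Submodule.smul_mem _ _ (Submodule.mem_span_singleton_self _), ?_⟩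
  ext <;> simp

lemma GV_le_of_generators_mem {p : P55} {S : Submodule k (k × k)}
    (h₁ : (1, 2) ≤ p → ((1 : k), (0 : k)) ∈ S) (h₂ : (2, 1) ≤ p → ((0 : k), (1 : k)) ∈ S)
    (h₃ : (0, 3) ≤ p ∨ (3, 0) ≤ p → ((1 : k), (1 : k)) ∈ S)
    (h₄ : (0, 4) ≤ p ∨ (4, 0) ≤ p → ((1 : k), (0 : k)) ∈ S) : GV k p ≤ S := by
  unfold GV
  refine sup_le (sup_le (sup_le ?_ ?_) ?_) ?_ <;> split_ifs with h <;> try exact bot_le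
  · exact (Submodule.span_singleton_le_iff_mem _ _).2 (h₁ h)
  · exact (Submodule.span_singleton_le_iff_mem _ _).2 (h₂ h)
  · exact (Submodule.span_singleton_le_iff_mem _ _).2 (h₃ h)
  · have h₃' := h₃ (h.imp (le_trans (by decide)) (le_trans (by decide)))
    rw [← span_e1_sup_span_diag]
    exact sup_le ((Submodule.span_singleton_le_iff_mem _ _).2 (h₄ h))
      ((Submodule.span_singleton_le_iff_mem _ _).2 h₃')

noncomputable def Gmod.mk (p : P55) (x : k × k) (hx : x ∈ GV k p) : (Gmod k).carrier p :=
  Submodule.Quotient.mk ⟨x, hx⟩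

namespace Gmod

lemma mk_surjective (p : P55) (z : (Gmod k).carrier p) : ∃ x hx, mk p x hx = z := by
  obtain ⟨⟨x, hx⟩, rfl⟩ := Submodule.Quotient.mk_surjective _ z
  exact ⟨x, hx, rfl⟩

lemma mk_eq_zero_iff {p : P55} {x : k × k} (hx : x ∈ GV k p) : mk p x hx = 0 ↔ x ∈ GW k p :=
  Submodule.Quotient.mk_eq_zero _

lemma mk_add {p : P55} {x y : k × k} (hx : x ∈ GV k p) (hy : y ∈ GV k p) :
    mk p (x + y) (add_mem hx hy) = mk p x hx + mk p y hy :=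
  rfl

lemma mk_smul {p : P55} (c : k) {x : k × k} (hx : x ∈ GV k p) :
    mk p (c • x) (Submodule.smul_mem _ c hx) = c • mk p x hx :=
  rfl

lemma mk_mem_eigenspace_of_le (f : Hom (Gmod k) (Gmod k)) {a : k} {p q : P55} (h : p ≤ q)
    {x : k × k} {hx : x ∈ GV k p} (hf : mk p x hx ∈ eigenspace (f.app p) a) :
    mk q x (GV_mono k h hx) ∈ eigenspace (f.app q) a :=
  f.map_mem_eigenspace h hf

lemma span_mk_eq_top {p : P55} {x : k × k} (hx : x ∈ GV k p) (h : GV k p ≤ (k ∙ x) ⊔ GW k p) :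
    k ∙ mk p x hx = ⊤ := by
  rw [eq_top_iff]
  rintro z -
  obtain ⟨y, hy, rfl⟩ := mk_surjective p z
  obtain ⟨u, hu, w, hw, rfl⟩ := Submodule.mem_sup.1 (h hy)
  obtain ⟨c, rfl⟩ := Submodule.mem_span_singleton.1 hu
  have hsplit : mk p (c • x + w) hy = c • mk p x hx + mk p w (GWV k p hw) := rfl
  rw [hsplit, (mk_eq_zero_iff _).2 hw, add_zero]
  exact Submodule.smul_mem _ _ (Submodule.mem_span_singleton_self _)

end Gmod

noncomputable def Gmod.preimage (p : P55) (E : Submodule k ((Gmod k).carrier p)) :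
    Submodule k (k × k) :=
  (E.comap (Submodule.mkQ _)).map (GV k p).subtype

lemma Gmod.mem_preimage {p : P55} {E : Submodule k ((Gmod k).carrier p)} {x : k × k} :
    x ∈ Gmod.preimage p E ↔ ∃ hx : x ∈ GV k p, Gmod.mk p x hx ∈ E :=
  ⟨fun ⟨⟨_, hy⟩, hmem, hyx⟩ => hyx ▸ ⟨hy, hmem⟩, fun ⟨hx, hmem⟩ => ⟨⟨x, hx⟩, hmem, rfl⟩⟩

theorem eq_scalarHom_of_generators (f : Hom (Gmod k) (Gmod k)) (a : k)
    (h₁ : Gmod.mk (1, 2) (1, 0) (e1_mem_GV le_rfl) ∈ eigenspace (f.app (1, 2)) a)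
    (h₂ : Gmod.mk (2, 1) (0, 1) (e2_mem_GV le_rfl) ∈ eigenspace (f.app (2, 1)) a)
    (h₃ : Gmod.mk (0, 3) (1, 1) (diag_mem_GV (.inl le_rfl)) ∈ eigenspace (f.app (0, 3)) a)
    (h₃' : Gmod.mk (3, 0) (1, 1) (diag_mem_GV (.inr le_rfl)) ∈ eigenspace (f.app (3, 0)) a)
    (h₄ : Gmod.mk (0, 4) (1, 0) (mem_GV_of_boundary (.inl le_rfl) _) ∈
      eigenspace (f.app (0, 4)) a)
    (h₄' : Gmod.mk (4, 0) (1, 0) (mem_GV_of_boundary (.inr le_rfl) _) ∈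
      eigenspace (f.app (4, 0)) a) :
    f = scalarHom a := by
  refine Hom.ext' fun p => LinearMap.ext fun z => ?_
  obtain ⟨x, hx, rfl⟩ := Gmod.mk_surjective p z
  have hle : GV k p ≤ Gmod.preimage p (eigenspace (f.app p) a) := by
    refine GV_le_of_generators_mem (fun h => ?_) (fun h => ?_) (fun h => ?_) (fun h => ?_)
    · exact Gmod.mem_preimage.2 ⟨e1_mem_GV h, Gmod.mk_mem_eigenspace_of_le f h h₁⟩
    · exact Gmod.mem_preimage.2 ⟨e2_mem_GV h, Gmod.mk_mem_eigenspace_of_le f h h₂⟩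
    · refine Gmod.mem_preimage.2 ⟨diag_mem_GV h, ?_⟩
      rcases h with h | h
      exacts [Gmod.mk_mem_eigenspace_of_le f h h₃, Gmod.mk_mem_eigenspace_of_le f h h₃']
    · refine Gmod.mem_preimage.2 ⟨mem_GV_of_boundary h _, ?_⟩
      rcases h with h | h
      exacts [Gmod.mk_mem_eigenspace_of_le f h h₄, Gmod.mk_mem_eigenspace_of_le f h h₄']
  obtain ⟨_, hmem⟩ := Gmod.mem_preimage.1 (hle hx)
  exact mem_eigenspace_iff.1 hmem

namespace Gmod

lemma mk_e1_ne_zero {p : P55} (h : (0, 4) ≤ p ∨ (4, 0) ≤ p) :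
    mk p ((1 : k), (0 : k)) (mem_GV_of_boundary h _) ≠ 0 := by
  rw [Ne, mk_eq_zero_iff, GW, if_pos h, Submodule.mem_span_singleton]
  rintro ⟨c, hc⟩
  simp only [Prod.smul_mk, smul_eq_mul, mul_one, Prod.mk.injEq] at hc
  exact one_ne_zero (hc.1.symm.trans hc.2)

lemma mk_e2_eq_neg_mk_e1 {p : P55} (h : (0, 4) ≤ p ∨ (4, 0) ≤ p) :
    mk p ((0 : k), (1 : k)) (mem_GV_of_boundary h _) = -mk p (1, 0) (mem_GV_of_boundary h _) := by
  rw [eq_neg_iff_add_eq_zero, ← mk_add, mk_eq_zero_iff, GW, if_pos h]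
  simp

lemma mk_diag_eq_add :
    mk (3, 3) ((1 : k), (1 : k)) (diag_mem_GV (.inl (by decide))) =
      mk (3, 3) (1, 0) (e1_mem_GV (by decide)) + mk (3, 3) (0, 1) (e2_mem_GV (by decide)) := by
  rw [← mk_add]
  congr 1
  simp

lemma linearIndependent_mk_e1_e2 :
    LinearIndependent k ![mk (3, 3) ((1 : k), (0 : k)) (e1_mem_GV (by decide)),
      mk (3, 3) (0, 1) (e2_mem_GV (by decide))] := by
  refine LinearIndependent.pair_iff.2 fun s t hst => ?_
  rw [← mk_smul, ← mk_smul, ← mk_add, mk_eq_zero_iff, GW, if_neg (by decide),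
    Submodule.mem_bot] at hst
  simpa using hst

end Gmod

theorem Gmod_not_isZeroMod : ¬ IsZeroMod (Gmod k) := fun h =>
  Gmod.mk_e1_ne_zero (k := k) (p := (0, 4)) (.inl le_rfl) (@Subsingleton.elim _ (h _) _ _)

theorem exists_eq_scalarHom (f : Hom (Gmod k) (Gmod k)) : ∃ a, f = scalarHom a := by
  obtain ⟨a, h₁⟩ := exists_mem_eigenspace_of_span_eq_top (g := f.app (1, 2))
    (Gmod.span_mk_eq_top (e1_mem_GV le_rfl) (by simp [GV, GW]))
  obtain ⟨b, h₂⟩ := exists_mem_eigenspace_of_span_eq_top (g := f.app (2, 1))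
    (Gmod.span_mk_eq_top (e2_mem_GV le_rfl) (by simp [GV, GW]))
  obtain ⟨c, h₃⟩ := exists_mem_eigenspace_of_span_eq_top (g := f.app (0, 3))
    (Gmod.span_mk_eq_top (diag_mem_GV (.inl le_rfl)) (by simp [GV, GW]))
  obtain ⟨c', h₃'⟩ := exists_mem_eigenspace_of_span_eq_top (g := f.app (3, 0))
    (Gmod.span_mk_eq_top (diag_mem_GV (.inr le_rfl)) (by simp [GV, GW]))
  obtain ⟨d, h₄⟩ := exists_mem_eigenspace_of_span_eq_top (g := f.app (0, 4))
    (Gmod.span_mk_eq_top (mem_GV_of_boundary (.inl le_rfl) (1, 0))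
      (by simp [GW, span_e1_sup_span_diag]))
  obtain ⟨d', h₄'⟩ := exists_mem_eigenspace_of_span_eq_top (g := f.app (4, 0))
    (Gmod.span_mk_eq_top (mem_GV_of_boundary (.inr le_rfl) (1, 0))
      (by simp [GW, span_e1_sup_span_diag]))
  have h₁₃₃ := Gmod.mk_mem_eigenspace_of_le f (q := (3, 3)) (by decide) h₁
  have h₂₃₃ := Gmod.mk_mem_eigenspace_of_le f (q := (3, 3)) (by decide) h₂
  have h₃₃₃ := Gmod.mk_mem_eigenspace_of_le f (q := (3, 3)) (by decide) h₃
  have h₃₃₃' := Gmod.mk_mem_eigenspace_of_le f (q := (3, 3)) (by decide) h₃'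
  rw [Gmod.mk_diag_eq_add] at h₃₃₃ h₃₃₃'
  obtain ⟨rfl, rfl⟩ := eq_of_mem_eigenspace_add Gmod.linearIndependent_mk_e1_e2 h₁₃₃ h₂₃₃ h₃₃₃
  obtain ⟨rfl, -⟩ := eq_of_mem_eigenspace_add Gmod.linearIndependent_mk_e1_e2 h₁₃₃ h₂₃₃ h₃₃₃'
  have h₁₁₄ := Gmod.mk_mem_eigenspace_of_le f (q := (1, 4)) (by decide) h₁
  have h₄₁₄ := Gmod.mk_mem_eigenspace_of_le f (q := (1, 4)) (by decide) h₄
  obtain rfl := eq_of_mem_eigenspace_of_ne_zero (Gmod.mk_e1_ne_zero (.inl (by decide))) h₁₁₄ h₄₁₄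
  have h₂₄₁ := Gmod.mk_mem_eigenspace_of_le f (q := (4, 1)) (by decide) h₂
  have h₄₄₁ := Gmod.mk_mem_eigenspace_of_le f (q := (4, 1)) (by decide) h₄'
  rw [Gmod.mk_e2_eq_neg_mk_e1 (.inr (by decide)), neg_mem_iff] at h₂₄₁
  obtain rfl := eq_of_mem_eigenspace_of_ne_zero (Gmod.mk_e1_ne_zero (.inr (by decide))) h₂₄₁ h₄₄₁
  exact ⟨_, eq_scalarHom_of_generators f _ h₁ h₂ h₃ h₃' h₄ h₄'⟩

noncomputable def Gmod.endRingEquiv : Hom (Gmod k) (Gmod k) ≃+* k :=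
  (RingEquiv.ofBijective scalarHom ⟨scalarHom_injective Gmod_not_isZeroMod,
    fun f => (exists_eq_scalarHom f).imp fun _ h => h.symm⟩).symm

end PersModG

/-- The persistence module `G` on `{0,1,2,3,4}²` is indecomposable; in fact its
endomorphism ring is isomorphic to `k`. -/
theorem Gmod_indecomposable (k : Type) [Field k] :
    (PersModG.Gmod k).Indecomposable ∧
    Nonempty (Hom (PersModG.Gmod k) (PersModG.Gmod k) ≃+* k) := by
  let φ := PersModG.Gmod.endRingEquiv (k := k)
  refine ⟨indecomposable_of_isIdempotentElem PersModG.Gmod_not_isZeroMod fun e he => ?_, ⟨φ⟩⟩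
  rcases IsIdempotentElem.iff_eq_zero_or_one.1 (he.map φ) with h | h
  exacts [.inl (φ.map_eq_zero_iff.1 h), .inr (φ.map_eq_one_iff.1 h)]
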